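/- If S is a signed support of a UCQ with negation q in D (i.e., the monotone rewriting q± holds on S ⊆ D±), then every database D' that contains all positive facts of S and is disjoint from the negative facts of S satisfies q. The converse fails: there exist a query q, database D, and S ⊆ D± such that every such D' satisfies q but S is not a signed support. -/
import Mathlib


/-- The constants of the database. -/
inductive Const | b | c | d
deriving DecidableEq

open Const

/-- Facts: `A x` and `R x y`. -/
abbrev DBFact := Const ⊕ Const × Const

def A (x : Const) : DBFact := Sum.inl x
def R (x y : Const) : DBFact := Sum.inr (x, y)

/-- `D'` satisfies q = ∃x,y. A(x) ∧ R(x,y) ∧ ¬A(y). -/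
def Sat (D' : Set DBFact) : Prop :=
  ∃ x y : Const, A x ∈ D' ∧ R x y ∈ D' ∧ A y ∉ D'

/-- The set of signed facts S = {+A(b), +R(b,c), +R(c,d), −A(d)}. -/
def S : Set (Bool × DBFact) :=
  {(true, A b), (true, R b c), (true, R c d), (false, A d)}

/-- The signed rewriting of q holds on the set of signed facts `T`. -/
def SatSigned (T : Set (Bool × DBFact)) : Prop :=
  ∃ x y : Const, (true, A x) ∈ T ∧ (true, R x y) ∈ T ∧ (false, A y) ∈ T

/-- Failure of the converse of the entailment property of signed supports:
S = {+A(b), +R(b,c), +R(c,d), −A(d)} is not a signed support of q (w.r.t.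
D = {A(b), R(b,c), A(c), R(c,d)}), yet every database containing the positive
facts of S and avoiding its negative facts satisfies q. -/
theorem entailment_converse_fails :
    ¬ SatSigned S ∧
    (∀ D' : Set DBFact, A b ∈ D' → R b c ∈ D' → R c d ∈ D' → A d ∉ D' →
      Sat D') := by
  constructor
  · rintro ⟨x, y, hA, hR, hN⟩
    simp only [S, Set.mem_insert_iff, Set.mem_singleton_iff, Prod.mk.injEq] at hA hR hN
    rcases hN with ⟨_,h⟩|⟨_,h⟩|⟨_,h⟩|⟨_,h⟩ <;> simp_all [A, R]
  · intro D' hb hbc hcd hd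
    by_cases hc : A c ∈ D'
    · exact ⟨c, d, hc, hcd, hd⟩
    · exact ⟨b, c, hb, hbc, hc⟩
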